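/- Let A and B be small permutative categories. The triangle of abelian groups relating π_0 K(Perm(A,B)), π_0 F(K(A),K(B)), and Ab(π_0 K(A), π_0 K(B)) commutes: the map induced by Φ followed by taking the induced map on π_0 equals the homomorphism π_0 K(Perm(A,B)) → Ab(π_0 K(A), π_0 K(B)) determined by sending the class of a strictly unital lax symmetric monoidal functor f: A → B to the group homomorphism of group completions induced by the restriction of f to object sets. -/

import Mathlib

open CategoryTheory MonoidalCategory

universe u v

/-- The data of a permutative (strict symmetric monoidal) structure on a category:
a sum functor `⊕`, a zero object, and a symmetry `γ`. -/
structure PermStruct (C : Type u) [Category.{v} C] where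
  add : C → C → C
  addHom : ∀ {a b c d : C}, (a ⟶ b) → (c ⟶ d) → (add a c ⟶ add b d)
  zero : C
  braid : ∀ a b : C, add a b ⟶ add b a

namespace PermStruct

/-- The axioms making `P` a permutative category: `⊕` is a functor, strictly associative and
unital, and `γ` is a natural symmetry satisfying the hexagon axiom. -/
structure IsPermutative {C : Type u} [Category.{v} C] (P : PermStruct C) : Prop where
  addHom_id : ∀ a b : C, P.addHom (𝟙 a) (𝟙 b) = 𝟙 (P.add a b)
  addHom_comp : ∀ {a b c a' b' c' : C} (f : a ⟶ b) (g : b ⟶ c) (f' : a' ⟶ b') (g' : b' ⟶ c'),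
      P.addHom (f ≫ g) (f' ≫ g') = P.addHom f f' ≫ P.addHom g g'
  add_assoc : ∀ a b c : C, P.add (P.add a b) c = P.add a (P.add b c)
  zero_add : ∀ a : C, P.add P.zero a = a
  add_zero : ∀ a : C, P.add a P.zero = a
  addHom_assoc : ∀ {a b c a' b' c' : C} (f : a ⟶ a') (g : b ⟶ b') (h : c ⟶ c'),
      P.addHom (P.addHom f g) h =
        eqToHom (add_assoc a b c) ≫ P.addHom f (P.addHom g h) ≫ eqToHom (add_assoc a' b' c').symm
  zero_addHom : ∀ {a b : C} (f : a ⟶ b),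
      P.addHom (𝟙 P.zero) f = eqToHom (zero_add a) ≫ f ≫ eqToHom (zero_add b).symm
  addHom_zero : ∀ {a b : C} (f : a ⟶ b),
      P.addHom f (𝟙 P.zero) = eqToHom (add_zero a) ≫ f ≫ eqToHom (add_zero b).symm
  braid_naturality : ∀ {a b c d : C} (f : a ⟶ b) (g : c ⟶ d),
      P.addHom f g ≫ P.braid b d = P.braid a c ≫ P.addHom g f
  braid_braid : ∀ a b : C, P.braid a b ≫ P.braid b a = 𝟙 (P.add a b)
  braid_hexagon : ∀ a b c : C,
      P.braid (P.add a b) c =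
        eqToHom (add_assoc a b c) ≫ P.addHom (𝟙 a) (P.braid b c) ≫
          eqToHom (add_assoc a c b).symm ≫ P.addHom (P.braid a c) (𝟙 b) ≫
          eqToHom (add_assoc c a b)

end PermStruct

/-- A small permutative category. -/
structure PermCat : Type 1 where
  C : Type
  [instCat : SmallCategory C]
  str : PermStruct C
  is : str.IsPermutative

attribute [instance] PermCat.instCat

/-- The "middle four interchange" map `(w ⊕ x) ⊕ (y ⊕ z) ⟶ (w ⊕ y) ⊕ (x ⊕ z)`,
given by `1 ⊕ γ ⊕ 1` (using strict associativity). -/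
def PermCat.midSwap (B : PermCat) (w x y z : B.C) :
    B.str.add (B.str.add w x) (B.str.add y z) ⟶ B.str.add (B.str.add w y) (B.str.add x z) :=
  eqToHom (by rw [B.is.add_assoc w x (B.str.add y z), ← B.is.add_assoc x y z]) ≫
    B.str.addHom (𝟙 w) (B.str.addHom (B.str.braid x y) (𝟙 z)) ≫
    eqToHom (by rw [B.is.add_assoc w y (B.str.add x z), B.is.add_assoc y x z])
/-- A strictly unital lax symmetric monoidal functor between permutative categories:
a functor `f` together with a natural structure morphism
`δ : f a ⊕ f a' ⟶ f (a ⊕ a')` which is strictly unital, associative and compatible with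
the symmetries. -/
structure SULax (A B : PermCat) : Type where
  obj : A.C → B.C
  map : ∀ {a b : A.C}, (a ⟶ b) → (obj a ⟶ obj b)
  map_id : ∀ a : A.C, map (𝟙 a) = 𝟙 (obj a)
  map_comp : ∀ {a b c : A.C} (f : a ⟶ b) (g : b ⟶ c), map (f ≫ g) = map f ≫ map g
  δ : ∀ a a' : A.C, B.str.add (obj a) (obj a') ⟶ obj (A.str.add a a')
  δ_natural : ∀ {a b a' b' : A.C} (f : a ⟶ b) (g : a' ⟶ b'),
      B.str.addHom (map f) (map g) ≫ δ b b' = δ a a' ≫ map (A.str.addHom f g)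
  obj_zero : obj A.str.zero = B.str.zero
  δ_zero_left : ∀ a : A.C,
      δ A.str.zero a = eqToHom (by rw [obj_zero, B.is.zero_add, A.is.zero_add])
  δ_zero_right : ∀ a : A.C,
      δ a A.str.zero = eqToHom (by rw [obj_zero, B.is.add_zero, A.is.add_zero])
  δ_assoc : ∀ a a' a'' : A.C,
      B.str.addHom (𝟙 (obj a)) (δ a' a'') ≫ δ a (A.str.add a' a'') =
        eqToHom (B.is.add_assoc (obj a) (obj a') (obj a'')).symm ≫
          B.str.addHom (δ a a') (𝟙 (obj a'')) ≫ δ (A.str.add a a') a'' ≫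
          eqToHom (congrArg obj (A.is.add_assoc a a' a''))
  δ_braid : ∀ a a' : A.C,
      B.str.braid (obj a) (obj a') ≫ δ a' a = δ a a' ≫ map (A.str.braid a a')

/-- A monoidal natural transformation between strictly unital lax symmetric monoidal
functors. -/
structure MonTrans {A B : PermCat} (f g : SULax A B) : Type where
  app : ∀ a : A.C, f.obj a ⟶ g.obj a
  naturality : ∀ {a b : A.C} (h : a ⟶ b), f.map h ≫ app b = app a ≫ g.map h
  monoidal : ∀ a a' : A.C,
      f.δ a a' ≫ app (A.str.add a a') = B.str.addHom (app a) (app a') ≫ g.δ a a'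
  unital : app A.str.zero = eqToHom (f.obj_zero.trans g.obj_zero.symm)

theorem MonTrans.ext' {A B : PermCat} {f g : SULax A B} :
    ∀ {η θ : MonTrans f g}, (∀ a, η.app a = θ.app a) → η = θ
  | ⟨a₁, _, _, _⟩, ⟨a₂, _, _, _⟩, h => by
      obtain rfl : a₁ = a₂ := funext h
      rfl

/-- The category of strictly unital lax symmetric monoidal functors `A → B` and
monoidal natural transformations. -/
instance SULax.category (A B : PermCat) : SmallCategory (SULax A B) where
  Hom := MonTrans
  id f :=
    { app := fun a => 𝟙 (f.obj a)
      naturality := by intros; simp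
      monoidal := by intro a a'; rw [B.is.addHom_id]; simp
      unital := by simp }
  comp := fun {f g h} η θ =>
    { app := fun a => η.app a ≫ θ.app a
      naturality := by
        intro a b k
        rw [← Category.assoc, η.naturality, Category.assoc, θ.naturality, ← Category.assoc]
      monoidal := by
        intro a a'
        rw [← Category.assoc, η.monoidal, Category.assoc, θ.monoidal, ← Category.assoc,
          ← B.is.addHom_comp]
      unital := by simp [η.unital, θ.unital] }
  id_comp := by intros; apply MonTrans.ext'; intros; simp
  comp_id := by intros; apply MonTrans.ext'; intros; simp
  assoc := by intros; apply MonTrans.ext'; intros; simp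

@[simp] theorem MonTrans.id_app {A B : PermCat} (f : SULax A B) (a : A.C) :
    (𝟙 f : MonTrans f f).app a = 𝟙 (f.obj a) := rfl

@[simp] theorem MonTrans.comp_app {A B : PermCat} {f g h : SULax A B}
    (η : f ⟶ g) (θ : g ⟶ h) (a : A.C) :
    (η ≫ θ : MonTrans f h).app a = η.app a ≫ θ.app a := rfl

/-- The identity functor as a strictly unital lax symmetric monoidal functor. -/
def SULax.id (A : PermCat) : SULax A A where
  obj a := a
  map f := f
  map_id _ := rfl
  map_comp _ _ := rfl
  δ a a' := 𝟙 _
  δ_natural _ _ := by simp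
  obj_zero := rfl
  δ_zero_left _ := by simp
  δ_zero_right _ := by simp
  δ_assoc a a' a'' := by simp [A.is.addHom_id]
  δ_braid _ _ := by simp
/-- A bilinear functor `(𝒜, ℬ) → 𝒞` of permutative categories in the sense of
Elmendorf–Mandell: a functor `𝒜 × ℬ → 𝒞` with natural linearity constraints `δ₁, δ₂`,
which vanishes when either input is zero, and whose constraints are strictly unital,
associative, compatible with the symmetries and satisfy the interchange condition. -/
structure Bilinear (𝒜 ℬ 𝒞 : PermCat) : Type where
  obj : 𝒜.C → ℬ.C → 𝒞.C
  map : ∀ {a a' : 𝒜.C} {b b' : ℬ.C}, (a ⟶ a') → (b ⟶ b') → (obj a b ⟶ obj a' b')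
  map_id : ∀ a b, map (𝟙 a) (𝟙 b) = 𝟙 (obj a b)
  map_comp : ∀ {a₁ a₂ a₃ : 𝒜.C} {b₁ b₂ b₃ : ℬ.C}
      (f : a₁ ⟶ a₂) (f' : a₂ ⟶ a₃) (g : b₁ ⟶ b₂) (g' : b₂ ⟶ b₃),
      map (f ≫ f') (g ≫ g') = map f g ≫ map f' g'
  δ₁ : ∀ (a a' : 𝒜.C) (b : ℬ.C), 𝒞.str.add (obj a b) (obj a' b) ⟶ obj (𝒜.str.add a a') b
  δ₂ : ∀ (a : 𝒜.C) (b b' : ℬ.C), 𝒞.str.add (obj a b) (obj a b') ⟶ obj a (ℬ.str.add b b')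
  δ₁_natural : ∀ {a₁ a₂ a₁' a₂' : 𝒜.C} {b b' : ℬ.C} (f : a₁ ⟶ a₂) (f' : a₁' ⟶ a₂') (g : b ⟶ b'),
      𝒞.str.addHom (map f g) (map f' g) ≫ δ₁ a₂ a₂' b' =
        δ₁ a₁ a₁' b ≫ map (𝒜.str.addHom f f') g
  δ₂_natural : ∀ {a a' : 𝒜.C} {b₁ b₂ b₁' b₂' : ℬ.C} (f : a ⟶ a') (g : b₁ ⟶ b₂) (g' : b₁' ⟶ b₂'),
      𝒞.str.addHom (map f g) (map f g') ≫ δ₂ a' b₂ b₂' =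
        δ₂ a b₁ b₁' ≫ map f (ℬ.str.addHom g g')
  obj_zero_left : ∀ b, obj 𝒜.str.zero b = 𝒞.str.zero
  obj_zero_right : ∀ a, obj a ℬ.str.zero = 𝒞.str.zero
  map_zero_left : ∀ {b b' : ℬ.C} (g : b ⟶ b'),
      map (𝟙 𝒜.str.zero) g = eqToHom (by rw [obj_zero_left, obj_zero_left])
  map_zero_right : ∀ {a a' : 𝒜.C} (f : a ⟶ a'),
      map f (𝟙 ℬ.str.zero) = eqToHom (by rw [obj_zero_right, obj_zero_right])
  δ₁_zero₁ : ∀ a' b, δ₁ 𝒜.str.zero a' b =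
      eqToHom (by rw [obj_zero_left, 𝒞.is.zero_add, 𝒜.is.zero_add])
  δ₁_zero₂ : ∀ a b, δ₁ a 𝒜.str.zero b =
      eqToHom (by rw [obj_zero_left, 𝒞.is.add_zero, 𝒜.is.add_zero])
  δ₁_zero₃ : ∀ a a', δ₁ a a' ℬ.str.zero =
      eqToHom (by rw [obj_zero_right, obj_zero_right, obj_zero_right, 𝒞.is.add_zero])
  δ₂_zero₁ : ∀ a b', δ₂ a ℬ.str.zero b' =
      eqToHom (by rw [obj_zero_right, 𝒞.is.zero_add, ℬ.is.zero_add])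
  δ₂_zero₂ : ∀ a b, δ₂ a b ℬ.str.zero =
      eqToHom (by rw [obj_zero_right, 𝒞.is.add_zero, ℬ.is.add_zero])
  δ₂_zero₃ : ∀ b b', δ₂ 𝒜.str.zero b b' =
      eqToHom (by rw [obj_zero_left, obj_zero_left, obj_zero_left, 𝒞.is.add_zero])
  δ₁_assoc : ∀ a a' a'' b,
      𝒞.str.addHom (𝟙 (obj a b)) (δ₁ a' a'' b) ≫ δ₁ a (𝒜.str.add a' a'') b =
        eqToHom (𝒞.is.add_assoc (obj a b) (obj a' b) (obj a'' b)).symm ≫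
          𝒞.str.addHom (δ₁ a a' b) (𝟙 (obj a'' b)) ≫ δ₁ (𝒜.str.add a a') a'' b ≫
          eqToHom (by rw [𝒜.is.add_assoc])
  δ₂_assoc : ∀ a b b' b'',
      𝒞.str.addHom (𝟙 (obj a b)) (δ₂ a b' b'') ≫ δ₂ a b (ℬ.str.add b' b'') =
        eqToHom (𝒞.is.add_assoc (obj a b) (obj a b') (obj a b'')).symm ≫
          𝒞.str.addHom (δ₂ a b b') (𝟙 (obj a b'')) ≫ δ₂ a (ℬ.str.add b b') b'' ≫
          eqToHom (by rw [ℬ.is.add_assoc])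
  δ₁_braid : ∀ a a' b,
      𝒞.str.braid (obj a b) (obj a' b) ≫ δ₁ a' a b =
        δ₁ a a' b ≫ map (𝒜.str.braid a a') (𝟙 b)
  δ₂_braid : ∀ a b b',
      𝒞.str.braid (obj a b) (obj a b') ≫ δ₂ a b' b =
        δ₂ a b b' ≫ map (𝟙 a) (ℬ.str.braid b b')
  interchange : ∀ a a' b b',
      𝒞.str.addHom (δ₁ a a' b) (δ₁ a a' b') ≫ δ₂ (𝒜.str.add a a') b b' =
        𝒞.midSwap (obj a b) (obj a' b) (obj a b') (obj a' b') ≫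
          𝒞.str.addHom (δ₂ a b b') (δ₂ a' b b') ≫ δ₁ a a' (ℬ.str.add b b')
/-- The pointwise-sum permutative structure on the category `Perm(A,B)` of strictly
unital lax symmetric monoidal functors `A → B` and monoidal natural transformations:
`(f ⊕ g)(a) = f(a) ⊕ g(a)`, with structure morphism the composite
`(1 ⊕ γ ⊕ 1) ≫ (δ^f ⊕ δ^g)`, and everything else pointwise. -/
structure PointwiseStr (A B : PermCat) : Type where
  P : PermStruct (SULax A B)
  is : P.IsPermutative
  add_obj : ∀ (f g : SULax A B) (a : A.C), (P.add f g).obj a = B.str.add (f.obj a) (g.obj a)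
  add_δ : ∀ (f g : SULax A B) (a a' : A.C),
      (P.add f g).δ a a' =
        eqToHom (by rw [add_obj, add_obj]) ≫
          B.midSwap (f.obj a) (g.obj a) (f.obj a') (g.obj a') ≫
          B.str.addHom (f.δ a a') (g.δ a a') ≫ eqToHom (add_obj f g (A.str.add a a')).symm
  addHom_app : ∀ {f g f' g' : SULax A B} (η : f ⟶ f') (θ : g ⟶ g') (a : A.C),
      (P.addHom η θ).app a =
        eqToHom (add_obj f g a) ≫ B.str.addHom (η.app a) (θ.app a) ≫
          eqToHom (add_obj f' g' a).symm
  zero_obj : ∀ a : A.C, P.zero.obj a = B.str.zero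
  braid_app : ∀ (f g : SULax A B) (a : A.C),
      (P.braid f g).app a =
        eqToHom (add_obj f g a) ≫ B.str.braid (f.obj a) (g.obj a) ≫
          eqToHom (add_obj g f a).symm

/-- The permutative category `Perm(A,B)`. -/
def PointwiseStr.toPermCat {A B : PermCat} (h : PointwiseStr A B) : PermCat :=
  { C := SULax A B, str := h.P, is := h.is }

/-- The evaluation bilinear functor `ev : (Perm(A,B), A) → B`, `ev(f,a) = f(a)`,
whose first linearity constraint is the identity and whose second linearity constraint
is the structure morphism of `f`. -/
structure EvStr (A B : PermCat) (h : PointwiseStr A B) : Type where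
  bil : Bilinear h.toPermCat A B
  obj_eq : ∀ (f : SULax A B) (a : A.C), bil.obj f a = f.obj a
  map_eq : ∀ {f f' : SULax A B} {a a' : A.C} (η : f ⟶ f') (u : a ⟶ a'),
      bil.map η u =
        eqToHom (obj_eq f a) ≫ f.map u ≫ η.app a' ≫ eqToHom (obj_eq f' a').symm
  δ₁_eq : ∀ (f f' : SULax A B) (a : A.C),
      bil.δ₁ f f' a = eqToHom (by simp only [PointwiseStr.toPermCat]; rw [obj_eq, obj_eq, obj_eq, h.add_obj])
  δ₂_eq : ∀ (f : SULax A B) (a a' : A.C),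
      bil.δ₂ f a a' =
        eqToHom (by rw [obj_eq, obj_eq]) ≫ f.δ a a' ≫ eqToHom (obj_eq f (A.str.add a a')).symm

/-- The composition bilinear functor `∘ : (Perm(B,C), Perm(A,B)) → Perm(A,C)`,
whose first linearity constraint is the identity and whose second linearity constraint
is given by the structure morphism of `g`. -/
structure CompStr (A B C : PermCat)
    (hBC : PointwiseStr B C) (hAB : PointwiseStr A B) (hAC : PointwiseStr A C) : Type where
  bil : Bilinear hBC.toPermCat hAB.toPermCat hAC.toPermCat
  obj_obj : ∀ (g : SULax B C) (f : SULax A B) (a : A.C),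
      (bil.obj g f).obj a = g.obj (f.obj a)
  obj_map : ∀ (g : SULax B C) (f : SULax A B) {a a' : A.C} (u : a ⟶ a'),
      (bil.obj g f).map u =
        eqToHom (obj_obj g f a) ≫ g.map (f.map u) ≫ eqToHom (obj_obj g f a').symm
  obj_δ : ∀ (g : SULax B C) (f : SULax A B) (a a' : A.C),
      (bil.obj g f).δ a a' =
        eqToHom (by rw [obj_obj, obj_obj]) ≫ g.δ (f.obj a) (f.obj a') ≫ g.map (f.δ a a') ≫
          eqToHom (obj_obj g f (A.str.add a a')).symm
  map_app : ∀ {g g' : SULax B C} {f f' : SULax A B} (θ : g ⟶ g') (η : f ⟶ f') (a : A.C),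
      (bil.map θ η).app a =
        eqToHom (obj_obj g f a) ≫ g.map (η.app a) ≫ θ.app (f'.obj a) ≫
          eqToHom (obj_obj g' f' a).symm
  δ₁_app : ∀ (g g' : SULax B C) (f : SULax A B) (a : A.C),
      (bil.δ₁ g g' f).app a =
        eqToHom (by simp only [PointwiseStr.toPermCat]; rw [hAC.add_obj, obj_obj, obj_obj, obj_obj, hBC.add_obj])
  δ₂_app : ∀ (g : SULax B C) (f f' : SULax A B) (a : A.C),
      (bil.δ₂ g f f').app a =
        eqToHom (by simp only [PointwiseStr.toPermCat]; rw [hAC.add_obj, obj_obj, obj_obj]) ≫ g.δ (f.obj a) (f'.obj a) ≫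
          eqToHom (by simp only [PointwiseStr.toPermCat]; rw [obj_obj, hAB.add_obj])
/-- The data of a K-theory multifunctor `𝕂` from the multicategory of small permutative
categories and multilinear functors to a symmetric monoidal category `V` of spectra
(viewed as a multicategory): an object assignment together with the induced maps on
0-morphisms (objects), 1-morphisms (strictly unital lax symmetric monoidal functors) and
2-morphisms (bilinear functors), compatible with identities and with plugging
0-morphisms into bilinear functors. -/
structure KTheoryData (V : Type u) [Category.{v} V] [MonoidalCategory V] :
    Type (max u v 1) where
  obj : PermCat → V
  map₀ : ∀ {B : PermCat}, B.C → (𝟙_ V ⟶ obj B)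
  map₁ : ∀ {A B : PermCat}, SULax A B → (obj A ⟶ obj B)
  map₂ : ∀ {A B C : PermCat}, Bilinear A B C → (obj A ⊗ obj B ⟶ obj C)
  map₁_id : ∀ A : PermCat, map₁ (SULax.id A) = 𝟙 (obj A)
  map₂_unit₁ : ∀ {𝒜 ℬ 𝒞 : PermCat} (m : Bilinear 𝒜 ℬ 𝒞) (a : 𝒜.C) (j : SULax ℬ 𝒞)
      (hobj : ∀ b, j.obj b = m.obj a b),
      (∀ {b b' : ℬ.C} (u : b ⟶ b'),
          j.map u = eqToHom (hobj b) ≫ m.map (𝟙 a) u ≫ eqToHom (hobj b').symm) →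
      (∀ b b', j.δ b b' =
          eqToHom (by rw [hobj, hobj]) ≫ m.δ₂ a b b' ≫
            eqToHom (hobj (ℬ.str.add b b')).symm) →
      (λ_ (obj ℬ)).inv ≫ (map₀ a ▷ obj ℬ) ≫ map₂ m = map₁ j
  map₂_unit₂ : ∀ {𝒜 ℬ 𝒞 : PermCat} (m : Bilinear 𝒜 ℬ 𝒞) (b : ℬ.C) (j : SULax 𝒜 𝒞)
      (hobj : ∀ a, j.obj a = m.obj a b),
      (∀ {a a' : 𝒜.C} (u : a ⟶ a'),
          j.map u = eqToHom (hobj a) ≫ m.map u (𝟙 b) ≫ eqToHom (hobj a').symm) →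
      (∀ a a', j.δ a a' =
          eqToHom (by rw [hobj, hobj]) ≫ m.δ₁ a a' b ≫
            eqToHom (hobj (𝒜.str.add a a')).symm) →
      (ρ_ (obj 𝒜)).inv ≫ (obj 𝒜 ◁ map₀ b) ≫ map₂ m = map₁ j

/-! Evaluating `Φ(f)` at the point `[a]` of `𝕂A` comes down, by adjunction and the unit axiom of
`𝕂` for `ev`, to `[a] ≫ 𝕂 f`. For a bilinear `m` and objects `x, y`, the two unit axioms give
`[y] ≫ 𝕂 m(x, -) = [x] ≫ 𝕂 m(-, y)`, both being `([x] ⊗ [y]) ≫ 𝕂 m`. Applying this to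
`ev : (Perm(A,B), A) → B`, to `(g, h) ↦ g (h a)` on `(Perm(B,B), Perm(A,B))`, and to
`ev : (Perm(B,B), B) → B` moves `[a] ≫ 𝕂 f` to `[id_B] ≫ 𝕂 (ev_{f a})` and back to
`[f a] ≫ 𝕂 id_B = [f a]`. -/

attribute [reducible] PointwiseStr.toPermCat

open MonoidalClosed in
theorem MonoidalClosed.leftUnitor_inv_tensorHom_curry_braiding_ev {V : Type u} [Category.{v} V]
    [MonoidalCategory V] [BraidedCategory V] [MonoidalClosed V] {X W Z : V}
    (g : W ⊗ X ⟶ Z) (s : 𝟙_ V ⟶ X) (p : 𝟙_ V ⟶ W) :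
    (λ_ (𝟙_ V)).inv ≫ (s ⊗ₘ (p ≫ curry ((β_ X W).hom ≫ g))) ≫ (ihom.ev X).app Z =
      (λ_ (𝟙_ V)).inv ≫ (p ⊗ₘ s) ≫ g := by
  rw [MonoidalCategory.tensorHom_def, Category.assoc, ← uncurry_eq, uncurry_natural_left,
    uncurry_curry, BraidedCategory.braiding_naturality_right_assoc,
    BraidedCategory.braiding_naturality_left_assoc,
    leftUnitor_inv_braiding_assoc, ← unitors_inv_equal, tensorHom_def', Category.assoc]

namespace Bilinear

variable {𝒜 ℬ 𝒞 : PermCat} (m : Bilinear 𝒜 ℬ 𝒞)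

structure IsPartialFst (x : 𝒜.C) (j : SULax ℬ 𝒞) : Prop where
  obj_eq : ∀ b, j.obj b = m.obj x b
  map_eq : ∀ {b b' : ℬ.C} (u : b ⟶ b'),
    j.map u = eqToHom (obj_eq b) ≫ m.map (𝟙 x) u ≫ eqToHom (obj_eq b').symm
  δ_eq : ∀ b b', j.δ b b' =
    eqToHom (by rw [obj_eq, obj_eq]) ≫ m.δ₂ x b b' ≫ eqToHom (obj_eq (ℬ.str.add b b')).symm

structure IsPartialSnd (y : ℬ.C) (j : SULax 𝒜 𝒞) : Prop where
  obj_eq : ∀ a, j.obj a = m.obj a y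
  map_eq : ∀ {a a' : 𝒜.C} (u : a ⟶ a'),
    j.map u = eqToHom (obj_eq a) ≫ m.map u (𝟙 y) ≫ eqToHom (obj_eq a').symm
  δ_eq : ∀ a a', j.δ a a' =
    eqToHom (by rw [obj_eq, obj_eq]) ≫ m.δ₁ a a' y ≫ eqToHom (obj_eq (𝒜.str.add a a')).symm

end Bilinear

namespace KTheoryData

variable {V : Type u} [Category.{v} V] [MonoidalCategory V] (K : KTheoryData V)
  {𝒜 ℬ 𝒞 : PermCat} {m : Bilinear 𝒜 ℬ 𝒞} {x : 𝒜.C} {y : ℬ.C}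

theorem map₀_comp_map₁_of_isPartialFst {j : SULax ℬ 𝒞} (h : m.IsPartialFst x j) :
    K.map₀ y ≫ K.map₁ j = (λ_ (𝟙_ V)).inv ≫ (K.map₀ x ⊗ₘ K.map₀ y) ≫ K.map₂ m := by
  rw [← K.map₂_unit₁ m x j h.obj_eq h.map_eq h.δ_eq, tensorHom_def',
    ← Category.assoc (K.map₀ y), leftUnitor_inv_naturality]
  simp

theorem map₀_comp_map₁_of_isPartialSnd {j : SULax 𝒜 𝒞} (h : m.IsPartialSnd y j) :
    K.map₀ x ≫ K.map₁ j = (λ_ (𝟙_ V)).inv ≫ (K.map₀ x ⊗ₘ K.map₀ y) ≫ K.map₂ m := by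
  rw [← K.map₂_unit₂ m y j h.obj_eq h.map_eq h.δ_eq, MonoidalCategory.tensorHom_def,
    ← Category.assoc (K.map₀ x), rightUnitor_inv_naturality, unitors_inv_equal]
  simp

theorem map₀_comp_map₁_swap {j₁ : SULax ℬ 𝒞} {j₂ : SULax 𝒜 𝒞} (h₁ : m.IsPartialFst x j₁)
    (h₂ : m.IsPartialSnd y j₂) : K.map₀ y ≫ K.map₁ j₁ = K.map₀ x ≫ K.map₁ j₂ := by
  rw [K.map₀_comp_map₁_of_isPartialFst h₁, K.map₀_comp_map₁_of_isPartialSnd h₂]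

end KTheoryData

namespace PermStruct.IsPermutative

variable {C : Type u} [Category.{v} C] {P : PermStruct C}

theorem addHom_eqToHom (hP : P.IsPermutative) {a b c d : C} (p : a = b) (q : c = d) :
    P.addHom (eqToHom p) (eqToHom q) = eqToHom (by rw [p, q]) := by
  subst p q
  simp [hP.addHom_id]

theorem addHom_id_eqToHom (hP : P.IsPermutative) (a : C) {c d : C} (q : c = d) :
    P.addHom (𝟙 a) (eqToHom q) = eqToHom (by rw [q]) := by
  rw [← eqToHom_refl _ rfl, hP.addHom_eqToHom]

theorem addHom_eqToHom_id (hP : P.IsPermutative) {a b : C} (p : a = b) (c : C) :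
    P.addHom (eqToHom p) (𝟙 c) = eqToHom (by rw [p]) := by
  rw [← eqToHom_refl _ rfl, hP.addHom_eqToHom]

theorem addHom_id_comp (hP : P.IsPermutative) (a : C) {x y z : C} (u : x ⟶ y) (v : y ⟶ z) :
    P.addHom (𝟙 a) (u ≫ v) = P.addHom (𝟙 a) u ≫ P.addHom (𝟙 a) v := by
  rw [← hP.addHom_comp, Category.comp_id]

theorem addHom_comp_id (hP : P.IsPermutative) (a : C) {x y z : C} (u : x ⟶ y) (v : y ⟶ z) :
    P.addHom (u ≫ v) (𝟙 a) = P.addHom u (𝟙 a) ≫ P.addHom v (𝟙 a) := by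
  rw [← hP.addHom_comp, Category.comp_id]

end PermStruct.IsPermutative

theorem SULax.map_eqToHom {A B : PermCat} (f : SULax A B) {x y : A.C} (p : x = y) :
    f.map (eqToHom p) = eqToHom (congrArg f.obj p) := by
  subst p
  simp [f.map_id]

theorem SULax.δ_congr {A B : PermCat} (f : SULax A B) {x x' y y' : A.C} (ex : x = x')
    (ey : y = y') :
    f.δ x y = eqToHom (by rw [ex, ey]) ≫ f.δ x' y' ≫ eqToHom (by rw [ex, ey]) := by
  subst ex ey
  simp

theorem MonTrans.app_congr {A B : PermCat} {f g : SULax A B} (θ : MonTrans f g) {x y : A.C}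
    (e : x = y) :
    θ.app x = eqToHom (congrArg f.obj e) ≫ θ.app y ≫ eqToHom (congrArg g.obj e).symm := by
  subst e
  simp

abbrev PointwiseStr.evalAt {C D : PermCat} (p : PointwiseStr C D) (c : C.C) :
    SULax p.toPermCat D where
  obj h := (h : SULax C D).obj c
  map {h h'} η := (η : MonTrans h h').app c
  map_id h := MonTrans.id_app (h : SULax C D) c
  map_comp {h₁ h₂ h₃} η θ := MonTrans.comp_app η θ c
  δ h h' := eqToHom (p.add_obj h h' c).symm
  δ_natural {h₁ h₂ h₁' h₂'} η θ := by
    rw [p.addHom_app]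
    simp
  obj_zero := p.zero_obj c
  δ_zero_left h := rfl
  δ_zero_right h := rfl
  δ_assoc h h' h'' := by
    simp [D.is.addHom_id_eqToHom, D.is.addHom_eqToHom_id]
  δ_braid h h' := by
    rw [p.braid_app]
    simp

namespace EvStr

variable {A B : PermCat} {p : PointwiseStr A B}

-- `PointwiseStr` does not record how sums and the zero functor act on morphisms, nor the
-- constraint of the zero functor; the axioms of `ev` force them.
theorem add_map (e : EvStr A B p) (f g : SULax A B) {x y : A.C} (u : x ⟶ y) :
    (p.P.add f g).map u =
      eqToHom (p.add_obj f g x) ≫ B.str.addHom (f.map u) (g.map u) ≫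
        eqToHom (p.add_obj f g y).symm := by
  have h := e.bil.δ₁_natural (𝟙 f) (𝟙 g) u
  rw [e.δ₁_eq, e.δ₁_eq, e.map_eq, e.map_eq, p.is.addHom_id, e.map_eq] at h
  simp only [MonTrans.id_app, Category.id_comp, Category.assoc, eqToHom_trans,
    B.is.addHom_comp, B.is.addHom_eqToHom, eqToHom_trans_assoc] at h
  rw [eqToHom_comp_iff, comp_eqToHom_iff] at h
  rw [h]
  simp

theorem zero_map (e : EvStr A B p) {x y : A.C} (u : x ⟶ y) :
    p.P.zero.map u = eqToHom (by rw [p.zero_obj, p.zero_obj]) := by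
  have h := e.bil.map_zero_left u
  rw [e.map_eq] at h
  simp only [MonTrans.id_app, Category.id_comp] at h
  rw [eqToHom_comp_iff, comp_eqToHom_iff] at h
  rw [h]
  simp

theorem zero_δ (e : EvStr A B p) (x y : A.C) :
    p.P.zero.δ x y = eqToHom (by rw [p.zero_obj, p.zero_obj, p.zero_obj, B.is.zero_add]) := by
  have h := e.bil.δ₂_zero₃ x y
  rw [e.δ₂_eq, eqToHom_comp_iff, comp_eqToHom_iff] at h
  rw [h]
  simp

theorem isPartialFst (e : EvStr A B p) (f : SULax A B) : e.bil.IsPartialFst f f where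
  obj_eq b := (e.obj_eq f b).symm
  map_eq u := by
    rw [e.map_eq]
    simp
  δ_eq b b' := by
    rw [e.δ₂_eq]
    simp

theorem isPartialSnd (e : EvStr A B p) (a : A.C) : e.bil.IsPartialSnd a (p.evalAt a) where
  obj_eq f := (e.obj_eq f a).symm
  map_eq η := by
    rw [e.map_eq]
    simp [SULax.map_id]
  δ_eq f f' := by
    rw [e.δ₁_eq]
    simp

end EvStr

abbrev PointwiseStr.compEval {A B C : PermCat} (pBC : PointwiseStr B C) (eBC : EvStr B C pBC)
    (pAB : PointwiseStr A B) (a : A.C) : Bilinear pBC.toPermCat pAB.toPermCat C where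
  obj g h := (g : SULax B C).obj ((h : SULax A B).obj a)
  map {g g'} {h h'} θ η :=
    (g : SULax B C).map ((η : MonTrans h h').app a) ≫
      (θ : MonTrans g g').app ((h' : SULax A B).obj a)
  map_id g h := by
    simp [SULax.map_id]
  map_comp {g₁ g₂ g₃} {h₁ h₂ h₃} θ θ' η η' := by
    simp only [MonTrans.comp_app]
    rw [(g₁ : SULax B C).map_comp]
    slice_lhs 2 3 => rw [(θ : MonTrans g₁ g₂).naturality]
    simp
  δ₁ g g' h := eqToHom (pBC.add_obj g g' ((h : SULax A B).obj a)).symm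
  δ₂ g h h' :=
    (g : SULax B C).δ ((h : SULax A B).obj a) ((h' : SULax A B).obj a) ≫
      (g : SULax B C).map (eqToHom (pAB.add_obj h h' a).symm)
  δ₁_natural {g₁ g₂ g₁' g₂'} {h h'} θ θ' η := by
    rw [eBC.add_map, pBC.addHom_app]
    simp [C.is.addHom_comp]
  δ₂_natural {g g'} {h₁ h₂ h₁' h₂'} θ η η' := by
    rw [pAB.addHom_app, C.is.addHom_comp]
    slice_lhs 2 3 => rw [← (θ : MonTrans g g').monoidal]
    slice_lhs 1 2 => rw [(g : SULax B C).δ_natural]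
    slice_lhs 3 4 => rw [← (θ : MonTrans g g').naturality]
    simp only [Category.assoc, (g : SULax B C).map_comp, SULax.map_eqToHom, eqToHom_refl,
      eqToHom_trans_assoc, Category.id_comp]
  obj_zero_left h := pBC.zero_obj _
  obj_zero_right g := by
    rw [pAB.zero_obj a, (g : SULax B C).obj_zero]
  map_zero_left {h h'} η := by
    simp [eBC.zero_map]
  map_zero_right {g g'} θ := by
    simp only [MonTrans.id_app]
    rw [(g : SULax B C).map_id, (θ : MonTrans g g').app_congr (pAB.zero_obj a),
      (θ : MonTrans g g').unital]
    simp
  δ₁_zero₁ g' h := rfl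
  δ₁_zero₂ g h := rfl
  δ₁_zero₃ g g' := rfl
  δ₂_zero₁ g h' := by
    rw [(g : SULax B C).δ_congr (pAB.zero_obj a) rfl, (g : SULax B C).δ_zero_left,
      SULax.map_eqToHom]
    simp
  δ₂_zero₂ g h := by
    rw [(g : SULax B C).δ_congr rfl (pAB.zero_obj a), (g : SULax B C).δ_zero_right,
      SULax.map_eqToHom]
    simp
  δ₂_zero₃ h h' := by
    rw [eBC.zero_δ, eBC.zero_map]
    simp
  δ₁_assoc g g' g'' h := by
    simp [C.is.addHom_id_eqToHom, C.is.addHom_eqToHom_id]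
  δ₂_assoc g h h' h'' := by
    rw [(g : SULax B C).δ_congr rfl (pAB.add_obj h' h'' a),
      (g : SULax B C).δ_congr (pAB.add_obj h h' a) rfl]
    simp only [SULax.map_eqToHom, C.is.addHom_id_comp, C.is.addHom_comp_id,
      C.is.addHom_id_eqToHom, C.is.addHom_eqToHom_id, Category.assoc, eqToHom_trans,
      eqToHom_refl, Category.id_comp, eqToHom_trans_assoc]
    slice_lhs 1 2 => rw [(g : SULax B C).δ_assoc]
    simp
  δ₁_braid g g' h := by
    simp [pBC.braid_app, SULax.map_id]
  δ₂_braid g h h' := by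
    simp only [MonTrans.id_app]
    rw [pAB.braid_app, (g : SULax B C).map_comp]
    slice_lhs 1 2 => rw [(g : SULax B C).δ_braid]
    simp only [SULax.map_eqToHom, (g : SULax B C).map_comp, Category.assoc, eqToHom_refl,
      Category.comp_id, Category.id_comp, eqToHom_trans_assoc]
  interchange g g' h h' := by
    rw [pBC.add_δ]
    simp [SULax.map_eqToHom, C.is.addHom_comp, C.is.addHom_eqToHom]

namespace PointwiseStr

variable {A B C : PermCat} (pBC : PointwiseStr B C) (eBC : EvStr B C pBC)
  (pAB : PointwiseStr A B) (a : A.C)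

theorem compEval_isPartialFst (pBB : PointwiseStr B B) (eBB : EvStr B B pBB) :
    (pBB.compEval eBB pAB a).IsPartialFst (SULax.id B) (pAB.evalAt a) where
  obj_eq h := rfl
  map_eq η := by
    simp [SULax.id]
  δ_eq h h' := by
    simp only [SULax.id, Category.id_comp]
    erw [eqToHom_trans, eqToHom_trans]

theorem compEval_isPartialSnd (f : SULax A B) :
    (pBC.compEval eBC pAB a).IsPartialSnd f (pBC.evalAt (f.obj a)) where
  obj_eq g := rfl
  map_eq θ := by
    simp [SULax.map_id]
  δ_eq g g' := by
    simp

end PointwiseStr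

theorem KTheoryData.map₀_comp_map₁_eq_map₀_obj {V : Type u} [Category.{v} V] [MonoidalCategory V]
    (K : KTheoryData V) {A B : PermCat} (pAB : PointwiseStr A B) (eAB : EvStr A B pAB)
    (pBB : PointwiseStr B B) (eBB : EvStr B B pBB) (f : SULax A B) (a : A.C) :
    K.map₀ a ≫ K.map₁ f = K.map₀ (f.obj a) :=
  calc K.map₀ a ≫ K.map₁ f = K.map₀ f ≫ K.map₁ (pAB.evalAt a) :=
        K.map₀_comp_map₁_swap (eAB.isPartialFst f) (eAB.isPartialSnd a)
    _ = K.map₀ (SULax.id B) ≫ K.map₁ (pBB.evalAt (f.obj a)) :=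
        K.map₀_comp_map₁_swap (pAB.compEval_isPartialFst a pBB eBB)
          (pBB.compEval_isPartialSnd eBB pAB a f)
    _ = K.map₀ (f.obj a) ≫ K.map₁ (SULax.id B) :=
        (K.map₀_comp_map₁_swap (eBB.isPartialFst _) (eBB.isPartialSnd _)).symm
    _ = K.map₀ (f.obj a) := by rw [K.map₁_id, Category.comp_id]

open MonoidalClosed in
/-- Let `A` and `B` be small permutative categories.  The triangle of
abelian groups relating `π₀ 𝕂(Perm(A,B))`, `π₀ F(𝕂A,𝕂B)` and `Ab(π₀ 𝕂A, π₀ 𝕂B)`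
commutes: the map induced by `Φ` followed by the canonical action
`π₀ F(X,Y) → Ab(π₀ X, π₀ Y)` equals the homomorphism determined by sending the class of
a strictly unital lax symmetric monoidal functor `f : A → B` to the group homomorphism
of group completions induced by the restriction of `f` to object sets (which sends the
class of an object `a` to the class of `f(a)`). -/
theorem pi0_triangle_commutes
    (V : Type u) [Category.{v} V] [MonoidalCategory V] [SymmetricCategory V]
    [MonoidalClosed V]
    (K : KTheoryData V)
    (pw : ∀ A B : PermCat, PointwiseStr A B)
    (ev : ∀ A B : PermCat, EvStr A B (pw A B))
    (Φ : ∀ A B : PermCat, K.obj ((pw A B).toPermCat) ⟶ (ihom (K.obj A)).obj (K.obj B))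
    (hΦ : ∀ A B : PermCat, Φ A B =
      curry ((β_ (K.obj A) (K.obj ((pw A B).toPermCat))).hom ≫ K.map₂ (ev A B).bil))
    (π₀ : V ⥤ AddCommGrpCat)
    (pt : ∀ X : V, (𝟙_ V ⟶ X) → π₀.obj X)
    (hpt : ∀ {X Y : V} (u : X ⟶ Y) (s : 𝟙_ V ⟶ X), π₀.map u (pt X s) = pt Y (s ≫ u))
    -- the canonical homomorphism `π₀ F(X,Y) →+ Ab(π₀ X, π₀ Y)`, characterized by
    -- evaluation of points
    (act : ∀ X Y : V, π₀.obj ((ihom X).obj Y) →+ (π₀.obj X →+ π₀.obj Y))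
    (hact : ∀ (X Y : V) (p : 𝟙_ V ⟶ (ihom X).obj Y) (s : 𝟙_ V ⟶ X),
      act X Y (pt _ p) (pt _ s) =
        pt Y ((λ_ (𝟙_ V)).inv ≫ (s ⊗ₘ p) ≫ (ihom.ev X).app Y)) :
    ∀ (A B : PermCat) (f : SULax A B) (a : A.C),
      act (K.obj A) (K.obj B)
          (π₀.map (Φ A B) (pt _ (K.map₀ (B := (pw A B).toPermCat) f)))
          (pt _ (K.map₀ a)) =
        pt _ (K.map₀ (f.obj a)) := by
  intro A B f a
  rw [hpt, hact, hΦ, leftUnitor_inv_tensorHom_curry_braiding_ev,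
    ← K.map₀_comp_map₁_of_isPartialFst ((ev A B).isPartialFst f),
    K.map₀_comp_map₁_eq_map₀_obj (pw A B) (ev A B) (pw B B) (ev B B)]
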